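/- Let $E, F$ be Riesz spaces and $T : E \to F$ an orthogonally additive operator. If for every $x \in E$ the supremum $R(x) = \sup\{T(u) : u \sqsubseteq x\}$ over all fragments $u$ of $x$ exists in $F$, then the positive part $T^+ = T \vee 0$ exists in the ordered vector space of orthogonally additive operators and $T^+(x) = R(x)$ for all $x \in E$. -/

import Mathlib

/-!
Fragments of a sum `x + y` of disjoint elements are exactly the sums `v + w` of disjoint
fragments `v ⊑ x`, `w ⊑ y`. To split `u ⊑ x + y`, note that `u⁺ + (x + y - u)⁺ = x⁺ + y⁺` with
both sums disjoint, so the Riesz decomposition of `u⁺` along `x⁺ ⊥ y⁺` (and likewise for the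
negative parts) gives `v = u⁺ ⊓ x⁺ - u⁻ ⊓ x⁻` and `w = u⁺ ⊓ y⁺ - u⁻ ⊓ y⁻`. Hence `T` maps the
fragments of `x + y` onto the pointwise sum of the images of the fragments of `x` and of `y`, and
taking suprema gives `R (x + y) = R x + R y`. Minimality of `R` holds because a positive
orthogonally additive `P` is monotone along fragments: `P x = P u + P (x - u) ≥ P u`.
-/

/-- Disjointness in a Riesz space: `|x| ⊓ |y| = 0`. -/
def RDisjoint {E : Type*} [Lattice E] [AddCommGroup E] (x y : E) : Prop :=
  |x| ⊓ |y| = 0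

/-- `x` is a fragment of `e` (lateral order `x ⊑ e`): `x ⊥ (e - x)`. -/
def IsFragment {E : Type*} [Lattice E] [AddCommGroup E] (x e : E) : Prop :=
  RDisjoint x (e - x)

/-- An orthogonally additive operator. -/
def IsOAO {E F : Type*} [Lattice E] [AddCommGroup E] [Lattice F] [AddCommGroup F]
    (T : E → F) : Prop :=
  ∀ x y : E, RDisjoint x y → T (x + y) = T x + T y

section LatticeOrderedGroup

variable {α : Type*} [Lattice α] {a b c a' b' : α}

lemma inf_eq_zero_of_le_of_le [Zero α] (h : a ⊓ b = 0) (ha' : 0 ≤ a') (hb' : 0 ≤ b') (ha : a' ≤ a)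
    (hb : b' ≤ b) : a' ⊓ b' = 0 :=
  le_antisymm (h ▸ inf_le_inf ha hb) (le_inf ha' hb')

variable [AddCommGroup α] [AddLeftMono α]

lemma posPart_le_abs (a : α) : a⁺ ≤ |a| :=
  posPart_add_negPart a ▸ le_add_of_nonneg_right (negPart_nonneg a)

lemma negPart_le_abs (a : α) : a⁻ ≤ |a| :=
  posPart_add_negPart a ▸ le_add_of_nonneg_left (posPart_nonneg a)

lemma add_inf_le_inf_add_inf (ha : 0 ≤ a) (hb : 0 ≤ b) (hc : 0 ≤ c) :
    (a + b) ⊓ c ≤ a ⊓ c + b ⊓ c := by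
  rw [inf_add, add_inf]
  exact le_inf (le_inf (inf_le_left.trans (by rw [add_comm])) (inf_le_right.trans
    (le_add_of_nonneg_left ha))) (inf_le_right.trans (le_add_of_nonneg_right (le_inf hb hc)))

lemma add_inf_eq_zero (hac : a ⊓ c = 0) (hbc : b ⊓ c = 0) : (a + b) ⊓ c = 0 := by
  have ha : 0 ≤ a := hac ▸ inf_le_left
  have hb : 0 ≤ b := hbc ▸ inf_le_left
  have hc : 0 ≤ c := hac ▸ inf_le_right
  refine le_antisymm ?_ (le_inf (add_nonneg ha hb) hc)
  simpa only [hac, hbc, add_zero] using add_inf_le_inf_add_inf ha hb hc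

lemma sup_eq_add_of_inf_eq_zero (h : a ⊓ b = 0) : a ⊔ b = a + b := by
  rw [← inf_add_sup a b, h, zero_add]

lemma posPart_sub_of_inf_eq_zero (h : a ⊓ b = 0) : (a - b)⁺ = a := by
  rw [posPart_def, ← sub_self b, ← sup_sub, sup_eq_add_of_inf_eq_zero h, add_sub_cancel_right]

lemma inf_add_inf_eq_self (ha : 0 ≤ a) (hbc : b ⊓ c = 0) (h : a ≤ b + c) :
    a ⊓ b + a ⊓ c = a := by
  have hb : 0 ≤ b := hbc ▸ inf_le_left
  have hc : 0 ≤ c := hbc ▸ inf_le_right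
  refine le_antisymm ?_ ?_
  · rw [← sup_eq_add_of_inf_eq_zero (inf_eq_zero_of_le_of_le hbc (le_inf ha hb) (le_inf ha hc)
      inf_le_right inf_le_right)]
    exact sup_le inf_le_left inf_le_left
  · calc a = (b + c) ⊓ a := (inf_eq_right.mpr h).symm
      _ ≤ b ⊓ a + c ⊓ a := add_inf_le_inf_add_inf hb hc ha
      _ = a ⊓ b + a ⊓ c := by rw [inf_comm b, inf_comm c]

end LatticeOrderedGroup

namespace RDisjoint

variable {E : Type*} [Lattice E] [AddCommGroup E] {a b c a' b' : E}

lemma symm (h : RDisjoint a b) : RDisjoint b a :=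
  (inf_comm _ _).trans h

lemma neg (h : RDisjoint a b) : RDisjoint (-a) (-b) := by
  rwa [RDisjoint, abs_neg, abs_neg]

variable [AddLeftMono E]

lemma mono (h : RDisjoint a b) (ha : |a'| ≤ |a|) (hb : |b'| ≤ |b|) : RDisjoint a' b' :=
  inf_eq_zero_of_le_of_le h (abs_nonneg a') (abs_nonneg b') ha hb

lemma add_left (ha : RDisjoint a c) (hb : RDisjoint b c) : RDisjoint (a + b) c :=
  inf_eq_zero_of_le_of_le (add_inf_eq_zero ha hb) (abs_nonneg _) (abs_nonneg c)
    (abs_add_le a b) le_rfl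

lemma add_right (hb : RDisjoint a b) (hc : RDisjoint a c) : RDisjoint a (b + c) :=
  (hb.symm.add_left hc.symm).symm

lemma posPart_add (h : RDisjoint a b) : (a + b)⁺ = a⁺ + b⁺ := by
  have hcross : a⁺ ⊓ b⁻ = 0 ∧ b⁺ ⊓ a⁻ = 0 :=
    ⟨inf_eq_zero_of_le_of_le h (posPart_nonneg a) (negPart_nonneg b) (posPart_le_abs a)
      (negPart_le_abs b),
    inf_eq_zero_of_le_of_le h.symm (posPart_nonneg b) (negPart_nonneg a) (posPart_le_abs b)
      (negPart_le_abs a)⟩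
  have hdisj : (a⁺ + b⁺) ⊓ (a⁻ + b⁻) = 0 := by
    refine add_inf_eq_zero ?_ ?_ <;> rw [inf_comm] <;> refine add_inf_eq_zero ?_ ?_ <;>
      rw [inf_comm]
    exacts [posPart_inf_negPart_eq_zero a, hcross.1, hcross.2, posPart_inf_negPart_eq_zero b]
  rw [← posPart_sub_of_inf_eq_zero hdisj]
  congr 1
  rw [add_sub_add_comm, posPart_sub_negPart, posPart_sub_negPart]

lemma negPart_add (h : RDisjoint a b) : (a + b)⁻ = a⁻ + b⁻ := by
  rw [← posPart_neg, neg_add, h.neg.posPart_add, posPart_neg, posPart_neg]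

lemma abs_add (h : RDisjoint a b) : |a + b| = |a| + |b| := by
  rw [← posPart_add_negPart, h.posPart_add, h.negPart_add, ← posPart_add_negPart a,
    ← posPart_add_negPart b, add_add_add_comm]

lemma posPart_le_posPart_add (h : RDisjoint a b) : a⁺ ≤ (a + b)⁺ :=
  h.posPart_add ▸ le_add_of_nonneg_right (posPart_nonneg b)

lemma negPart_le_negPart_add (h : RDisjoint a b) : a⁻ ≤ (a + b)⁻ :=
  h.negPart_add ▸ le_add_of_nonneg_right (negPart_nonneg b)

end RDisjoint

section Fragments

variable {E : Type*} [Lattice E] [AddCommGroup E] [AddLeftMono E] {u v w x y : E}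

lemma isFragment_zero (x : E) : IsFragment 0 x := by
  rw [IsFragment, RDisjoint, abs_zero, sub_zero, inf_eq_left]
  exact abs_nonneg x

lemma isFragment_self (x : E) : IsFragment x x := by
  rw [IsFragment, RDisjoint, sub_self, abs_zero, inf_eq_right]
  exact abs_nonneg x

lemma IsFragment.abs_eq (h : IsFragment u x) : |x| = |u| + |x - u| := by
  rw [← RDisjoint.abs_add h, add_sub_cancel]

lemma IsFragment.abs_le (h : IsFragment u x) : |u| ≤ |x| :=
  h.abs_eq ▸ le_add_of_nonneg_right (abs_nonneg _)

lemma IsFragment.abs_sub_le (h : IsFragment u x) : |x - u| ≤ |x| :=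
  h.abs_eq ▸ le_add_of_nonneg_left (abs_nonneg _)

lemma IsFragment.add (hv : IsFragment v x) (hw : IsFragment w y) (hxy : RDisjoint x y) :
    IsFragment (v + w) (x + y) := by
  rw [IsFragment, add_sub_add_comm]
  exact RDisjoint.add_left (RDisjoint.add_right hv (hxy.mono hv.abs_le hw.abs_sub_le))
    (RDisjoint.add_right (hxy.symm.mono hw.abs_le hv.abs_sub_le) hw)

end Fragments

section LateralInf

variable {E : Type*} [Lattice E] [AddCommGroup E] {c d u r x y z : E}

/-- The meet of `x` and `y` in the lateral order `⊑` when both are fragments of one element. -/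
def lateralInf (x y : E) : E :=
  x⁺ ⊓ y⁺ - x⁻ ⊓ y⁻

lemma lateralInf_comm (x y : E) : lateralInf x y = lateralInf y x := by
  rw [lateralInf, lateralInf, inf_comm x⁺, inf_comm x⁻]

variable [AddLeftMono E]

lemma abs_lateralInf_le_left (x y : E) : |lateralInf x y| ≤ |x| := by
  have hp : 0 ≤ x⁺ ⊓ y⁺ := le_inf (posPart_nonneg x) (posPart_nonneg y)
  have hn : 0 ≤ x⁻ ⊓ y⁻ := le_inf (negPart_nonneg x) (negPart_nonneg y)
  calc |lateralInf x y| = |x⁺ ⊓ y⁺ + -(x⁻ ⊓ y⁻)| := by rw [lateralInf, sub_eq_add_neg]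
    _ ≤ |x⁺ ⊓ y⁺| + |-(x⁻ ⊓ y⁻)| := abs_add_le _ _
    _ = x⁺ ⊓ y⁺ + x⁻ ⊓ y⁻ := by rw [abs_neg, abs_of_nonneg hp, abs_of_nonneg hn]
    _ ≤ x⁺ + x⁻ := add_le_add inf_le_left inf_le_left
    _ = |x| := posPart_add_negPart x

lemma abs_lateralInf_le_right (x y : E) : |lateralInf x y| ≤ |y| :=
  lateralInf_comm x y ▸ abs_lateralInf_le_left y x

lemma lateralInf_add_lateralInf (hcd : RDisjoint c d) (hp : z⁺ ≤ (c + d)⁺)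
    (hn : z⁻ ≤ (c + d)⁻) : lateralInf z c + lateralInf z d = z := by
  rw [hcd.posPart_add] at hp
  rw [hcd.negPart_add] at hn
  have hp' := inf_add_inf_eq_self (posPart_nonneg z) (inf_eq_zero_of_le_of_le hcd
    (posPart_nonneg c) (posPart_nonneg d) (posPart_le_abs c) (posPart_le_abs d)) hp
  have hn' := inf_add_inf_eq_self (negPart_nonneg z) (inf_eq_zero_of_le_of_le hcd
    (negPart_nonneg c) (negPart_nonneg d) (negPart_le_abs c) (negPart_le_abs d)) hn
  rw [lateralInf, lateralInf, sub_add_sub_comm, hp', hn', posPart_sub_negPart]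

lemma isFragment_lateralInf (hur : RDisjoint u r) (hxy : RDisjoint x y) (h : u + r = x + y) :
    IsFragment (lateralInf u x) x := by
  have hx : lateralInf x u + lateralInf x r = x :=
    lateralInf_add_lateralInf hur (h ▸ hxy.posPart_le_posPart_add)
      (h ▸ hxy.negPart_le_negPart_add)
  have hsub : x - lateralInf u x = lateralInf r x := by
    rw [sub_eq_iff_eq_add', lateralInf_comm u x, lateralInf_comm r x, hx]
  rw [IsFragment, hsub]
  exact hur.mono (abs_lateralInf_le_left u x) (abs_lateralInf_le_left r x)

theorem exists_isFragment_add_eq (hxy : RDisjoint x y) (hu : IsFragment u (x + y)) :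
    ∃ v w, IsFragment v x ∧ IsFragment w y ∧ RDisjoint v w ∧ v + w = u := by
  have h : u + (x + y - u) = x + y := add_sub_cancel u (x + y)
  refine ⟨lateralInf u x, lateralInf u y, isFragment_lateralInf hu hxy h,
    isFragment_lateralInf hu hxy.symm (h.trans (add_comm x y)),
    hxy.mono (abs_lateralInf_le_right u x) (abs_lateralInf_le_right u y),
    lateralInf_add_lateralInf hxy ?_ ?_⟩
  · exact h ▸ hu.posPart_le_posPart_add
  · exact h ▸ hu.negPart_le_negPart_add

end LateralInf

namespace IsOAO

variable {E F : Type*} [Lattice E] [AddCommGroup E] [Lattice F] [AddCommGroup F]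
  {T : E → F} {u x y : E}

lemma le_of_isFragment [AddLeftMono F] (hT : IsOAO T) (hT₀ : ∀ x, 0 ≤ T x)
    (hu : IsFragment u x) : T u ≤ T x :=
  calc T u ≤ T u + T (x - u) := le_add_of_nonneg_right (hT₀ _)
    _ = T x := by rw [← hT u (x - u) hu, add_sub_cancel]

variable [AddLeftMono E]

lemma map_zero (hT : IsOAO T) : T 0 = 0 := by
  have h := hT 0 0 (by rw [RDisjoint, abs_zero, inf_idem])
  rwa [add_zero, left_eq_add] at h

open scoped Pointwise in
lemma image_isFragment_add (hT : IsOAO T) (hxy : RDisjoint x y) :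
    T '' {u | IsFragment u (x + y)} = T '' {v | IsFragment v x} + T '' {w | IsFragment w y} := by
  ext z
  constructor
  · rintro ⟨u, hu, rfl⟩
    obtain ⟨v, w, hv, hw, hvw, rfl⟩ := exists_isFragment_add_eq hxy hu
    exact ⟨T v, ⟨v, hv, rfl⟩, T w, ⟨w, hw, rfl⟩, (hT v w hvw).symm⟩
  · rintro ⟨_, ⟨v, hv, rfl⟩, _, ⟨w, hw, rfl⟩, rfl⟩
    exact ⟨v + w, hv.add hw hxy, hT v w (hxy.mono hv.abs_le hw.abs_le)⟩

end IsOAO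

variable {E F : Type*}
  [Lattice E] [AddCommGroup E] [CovariantClass E E (· + ·) (· ≤ ·)]
  [Lattice F] [AddCommGroup F] [CovariantClass F F (· + ·) (· ≤ ·)]

/-- If `R x = sup {T u : u ⊑ x}` exists for all `x`, then `R = T⁺ = T ∨ 0` in the
ordered vector space of OAOs. -/
theorem oao_posPart_exists (T : E → F) (hT : IsOAO T) (R : E → F)
    (hR : ∀ x : E, IsLUB {z : F | ∃ u : E, IsFragment u x ∧ z = T u} (R x)) :
    IsOAO R ∧ (∀ x, T x ≤ R x) ∧ (∀ x, 0 ≤ R x) ∧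
    ∀ P : E → F, IsOAO P → (∀ x, T x ≤ P x) → (∀ x, 0 ≤ P x) → ∀ x, R x ≤ P x := by
  have hR' : ∀ x, IsLUB (T '' {u | IsFragment u x}) (R x) := fun x => by
    simpa only [Set.image, Set.mem_ofPred_eq, eq_comm] using hR x
  refine ⟨fun x y hxy => ?_, fun x => (hR' x).1 ⟨x, isFragment_self x, rfl⟩,
    fun x => hT.map_zero ▸ (hR' x).1 ⟨0, isFragment_zero x, rfl⟩,
    fun P hP hTP hP₀ x => (hR' x).2 ?_⟩
  · exact (hR' (x + y)).unique (hT.image_isFragment_add hxy ▸ (hR' x).add (hR' y))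
  · rintro _ ⟨u, hu, rfl⟩
    exact (hTP u).trans (hP.le_of_isFragment hP₀ hu)
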